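/- Let G be symmetric positive definite and K skew-symmetric real matrices, R = -G⁻¹ K G⁻¹ K, and 0 < γ ≤ 1. Then W_γ = γ I + (1-γ) R is invertible. -/

import Mathlib

open Matrix

private lemma posDef_smul' {n : ℕ} {A : Matrix (Fin n) (Fin n) ℝ} (hA : A.PosDef)
    {c : ℝ} (hc : 0 < c) : (c • A).PosDef := by
  refine ⟨?_, fun x hx => ?_⟩
  · unfold Matrix.IsHermitian
    rw [conjTranspose_smul, hA.1]
    simp
  · have hsum : (x.sum fun i xi => x.sum fun j xj => star xi * (c • A) i j * xj) =
        c * x.sum fun i xi => x.sum fun j xj => star xi * A i j * xj := by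
      rw [Finsupp.mul_sum]
      refine Finsupp.sum_congr fun i _ => ?_
      rw [Finsupp.mul_sum]
      refine Finsupp.sum_congr fun j _ => ?_
      rw [Matrix.smul_apply, smul_eq_mul]
      ring
    rw [hsum]
    exact mul_pos hc (hA.2 hx)

private lemma posSemidef_smul' {n : ℕ} {A : Matrix (Fin n) (Fin n) ℝ} (hA : A.PosSemidef)
    {c : ℝ} (hc : 0 ≤ c) : (c • A).PosSemidef := by
  refine ⟨?_, fun x => ?_⟩
  · unfold Matrix.IsHermitian
    rw [conjTranspose_smul, hA.1]
    simp
  · have hsum : (x.sum fun i xi => x.sum fun j xj => star xi * (c • A) i j * xj) =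
        c * x.sum fun i xi => x.sum fun j xj => star xi * A i j * xj := by
      rw [Finsupp.mul_sum]
      refine Finsupp.sum_congr fun i _ => ?_
      rw [Finsupp.mul_sum]
      refine Finsupp.sum_congr fun j _ => ?_
      rw [Matrix.smul_apply, smul_eq_mul]
      ring
    rw [hsum]
    exact mul_nonneg hc (hA.2 x)

theorem W_gamma_invertible {n : ℕ}
    (G K : Matrix (Fin n) (Fin n) ℝ) (hG : G.PosDef) (hGs : G.IsSymm) (hK : Kᵀ = -K)
    (γ : ℝ) (hγ0 : 0 < γ) (hγ1 : γ ≤ 1) :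
    IsUnit (γ • (1 : Matrix (Fin n) (Fin n) ℝ) + (1 - γ) • (-(G⁻¹ * K * G⁻¹ * K))) := by
  set W : Matrix (Fin n) (Fin n) ℝ :=
    γ • (1 : Matrix (Fin n) (Fin n) ℝ) + (1 - γ) • (-(G⁻¹ * K * G⁻¹ * K)) with hW
  have hGu : IsUnit G := hG.isUnit
  have hGdet : IsUnit G.det := (Matrix.isUnit_iff_isUnit_det G).mp hGu
  -- P := G * W is positive definite
  have hPSD : (Kᴴ * G⁻¹ * K).PosSemidef := hG.inv.posSemidef.conjTranspose_mul_mul_same K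
  have hP : (γ • G + (1 - γ) • (Kᴴ * G⁻¹ * K)).PosDef :=
    (posDef_smul' hG hγ0).add_posSemidef (posSemidef_smul' hPSD (by linarith))
  have hGW : G * W = γ • G + (1 - γ) • (Kᴴ * G⁻¹ * K) := by
    have hKH : Kᴴ = -K := by
      rw [show Kᴴ = Kᵀ from rfl, hK]
    rw [hW, Matrix.mul_add, Matrix.mul_smul, Matrix.mul_one, Matrix.mul_smul, hKH]
    congr 1
    rw [show G⁻¹ * K * G⁻¹ * K = G⁻¹ * (K * G⁻¹ * K) by noncomm_ring,
      Matrix.mul_neg, ← Matrix.mul_assoc, Matrix.mul_nonsing_inv G hGdet, Matrix.one_mul]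
    noncomm_ring
  have hPu : IsUnit (G * W) := hGW ▸ hP.isUnit
  rw [← Matrix.isUnit_iff_isUnit_det] at hGdet
  have := (Matrix.isUnit_iff_isUnit_det _).mp hPu
  rw [Matrix.det_mul] at this
  exact (Matrix.isUnit_iff_isUnit_det W).mpr (isUnit_of_mul_isUnit_right this)
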